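/- arXiv:0906.5077 — 2 statements merged into one kernel-verified Lean document; each statement's English description precedes it below -/
import Mathlib

section
/- Fix α, w > 0 and ε ∈ (0,1). The operator A₁ : V_ε → U mapping φ to the solution c of -c'' + αw²φc = 0, c(0)=1, c'(1)=0 is compact: for any sequence {φₙ} in V_ε, the sequence {A₁(φₙ)} has a uniformly convergent subsequence. -/
open Set Filter BoundedContinuousFunction

/-!
On `(0, 1)` the equation gives `|cₙ''| = α w² φₙ cₙ ≤ α w²`. By the mean value theorem `cₙ'`
takes the value `cₙ 1 - cₙ 0 ∈ [-1, 1]` somewhere in `(0, 1)`, hence `|cₙ'| ≤ α w² + 1`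
throughout, so the `cₙ` are uniformly Lipschitz with values in `[0, 1]`, and Arzelà–Ascoli
yields a uniformly convergent subsequence.
-/

theorem abs_deriv_le_of_abs_deriv_deriv_le {f : ℝ → ℝ} {a b M : ℝ} (hab : a < b)
    (hf : ContinuousOn f (Icc a b)) (hf' : DifferentiableOn ℝ f (Ioo a b))
    (hf'' : DifferentiableOn ℝ (deriv f) (Ioo a b))
    (hM : ∀ x ∈ Ioo a b, |deriv (deriv f) x| ≤ M) {x : ℝ} (hx : x ∈ Ioo a b) :
    |deriv f x| ≤ M * (b - a) + |f b - f a| / (b - a) := by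
  obtain ⟨ξ, hξ, hslope⟩ := exists_deriv_eq_slope f hab hf hf'
  have hxξ : |deriv f x - deriv f ξ| ≤ M * |x - ξ| :=
    (convex_Ioo a b).norm_image_sub_le_of_norm_deriv_le
      (fun y hy => (hf'' y hy).differentiableAt (Ioo_mem_nhds hy.1 hy.2)) hM hξ hx
  have hM0 : 0 ≤ M := (abs_nonneg _).trans (hM x hx)
  have hdist : |x - ξ| ≤ b - a :=
    abs_sub_le_iff.2 ⟨by linarith [hx.2, hξ.1], by linarith [hx.1, hξ.2]⟩
  have hξ' : |deriv f ξ| = |f b - f a| / (b - a) := by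
    rw [hslope, abs_div, abs_of_pos (sub_pos.2 hab)]
  calc |deriv f x| ≤ |deriv f x - deriv f ξ| + |deriv f ξ| :=
        sub_le_iff_le_add.1 (abs_sub_abs_le_abs_sub _ _)
    _ ≤ M * (b - a) + |f b - f a| / (b - a) := by
      rw [hξ']
      gcongr
      exact hxξ.trans (by gcongr)

theorem lipschitzOnWith_Icc_of_abs_deriv_le {f : ℝ → ℝ} {a b K : ℝ} (hab : a < b)
    (hf : ContinuousOn f (Icc a b)) (hf' : DifferentiableOn ℝ f (Ioo a b))
    (hK : ∀ x ∈ Ioo a b, |deriv f x| ≤ K) : LipschitzOnWith K.toNNReal f (Icc a b) := by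
  rw [← closure_Ioo hab.ne] at hf ⊢
  refine LipschitzOnWith.closure hf (LipschitzOnWith.of_dist_le' fun x hx y hy => ?_)
  exact (convex_Ioo a b).norm_image_sub_le_of_norm_deriv_le
    (fun z hz => (hf' z hz).differentiableAt (Ioo_mem_nhds hz.1 hz.2)) hK hy hx

theorem ContDiffOn.lipschitzOnWith_Icc_of_abs_deriv_deriv_le {f : ℝ → ℝ} {a b M : ℝ}
    (hab : a < b) (hf : ContDiffOn ℝ 2 f (Icc a b))
    (hM : ∀ x ∈ Ioo a b, |deriv (deriv f) x| ≤ M) :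
    LipschitzOnWith (M * (b - a) + |f b - f a| / (b - a)).toNNReal f (Icc a b) := by
  have hf' : DifferentiableOn ℝ f (Ioo a b) :=
    (hf.mono Ioo_subset_Icc_self).differentiableOn two_ne_zero
  have hf'' : DifferentiableOn ℝ (deriv f) (Ioo a b) :=
    ((hf.mono Ioo_subset_Icc_self).deriv_of_isOpen isOpen_Ioo
      (by norm_num : (1 : WithTop ℕ∞) + 1 ≤ 2)).differentiableOn one_ne_zero
  exact lipschitzOnWith_Icc_of_abs_deriv_le hab hf.continuousOn hf'
    fun x hx => abs_deriv_le_of_abs_deriv_deriv_le hab hf.continuousOn hf' hf'' hM hx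

theorem exists_subseq_tendstoUniformlyOn_of_equicontinuousOn {X β : Type*} [TopologicalSpace X]
    [PseudoMetricSpace β] [T2Space β] {s : Set X} (hs : IsCompact s) {t : Set β}
    (ht : IsCompact t) (f : ℕ → X → β) (hf : EquicontinuousOn f s)
    (hft : ∀ n, MapsTo (f n) s t) :
    ∃ (ψ : ℕ → ℕ) (g : X → β), StrictMono ψ ∧ ContinuousOn g s ∧
      TendstoUniformlyOn (fun k => f (ψ k)) g atTop s := by
  have : CompactSpace s := isCompact_iff_compactSpace.mp hs
  have hF : Equicontinuous (s.domRestrict ∘ f) := (equicontinuous_restrict_iff f).2 hf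
  let F : ℕ → s →ᵇ β := fun n => mkOfCompact ⟨s.domRestrict (f n), hF.continuous n⟩
  have hFeq : Equicontinuous ((↑) : range F → s → β) :=
    (equicontinuous_iff_range.1 hF).comp fun G : range F =>
      ⟨G.1, by obtain ⟨n, hn⟩ := G.2; exact ⟨n, by rw [← hn]; rfl⟩⟩
  have hA : IsCompact (closure (range F)) :=
    arzela_ascoli t ht (range F) (by rintro _ x ⟨n, rfl⟩; exact hft n x.2) hFeq
  obtain ⟨g, -, ψ, hψ, hlim⟩ := hA.tendsto_subseq fun n => subset_closure (mem_range_self n)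
  have hg : s.domRestrict (Function.extend Subtype.val g (f 0)) = g :=
    funext (Subtype.val_injective.extend_apply _ _)
  refine ⟨ψ, Function.extend Subtype.val g (f 0), hψ, ?_, ?_⟩
  · rw [continuousOn_iff_continuous_domRestrict, hg]
    exact g.continuous
  · rw [tendstoUniformlyOn_iff_tendstoUniformly_comp_coe,
      show Function.extend Subtype.val g (f 0) ∘ Subtype.val = g from hg]
    exact tendsto_iff_tendstoUniformly.mp hlim

theorem stmt9_general (φ c : ℕ → ℝ → ℝ) (ε α w : ℝ)
    (hε : 0 < ε) (hα : 0 < α)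
    (hφb : ∀ n, ∀ x ∈ Icc (0:ℝ) 1, ε ≤ φ n x ∧ φ n x ≤ 1)
    (hc : ∀ n, ContDiffOn ℝ 2 (c n) (Icc 0 1))
    (hcb : ∀ n, ∀ x ∈ Icc (0:ℝ) 1, 0 ≤ c n x ∧ c n x ≤ 1)
    (heq : ∀ n, ∀ x ∈ Ioo (0:ℝ) 1,
      -(deriv (deriv (c n)) x) + α * w ^ 2 * φ n x * c n x = 0) :
    ∃ (ψ : ℕ → ℕ) (climit : ℝ → ℝ), StrictMono ψ ∧ ContinuousOn climit (Icc 0 1) ∧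
      TendstoUniformlyOn (fun k => c (ψ k)) climit Filter.atTop (Icc 0 1) := by
  have hc'' : ∀ n, ∀ x ∈ Ioo (0:ℝ) 1, |deriv (deriv (c n)) x| ≤ α * w ^ 2 := by
    intro n x hx
    obtain ⟨hεφ, hφ1⟩ := hφb n x (Ioo_subset_Icc_self hx)
    obtain ⟨hc0, hc1⟩ := hcb n x (Ioo_subset_Icc_self hx)
    have hφ0 : 0 ≤ φ n x := hε.le.trans hεφ
    rw [show deriv (deriv (c n)) x = α * w ^ 2 * (φ n x * c n x) by linarith [heq n x hx],
      abs_of_nonneg (by positivity)]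
    exact mul_le_of_le_one_right (by positivity) (mul_le_one₀ hφ1 hc0 hc1)
  have hLip : ∀ n, LipschitzOnWith (α * w ^ 2 + 1).toNNReal (c n) (Icc 0 1) := by
    intro n
    refine ((hc n).lipschitzOnWith_Icc_of_abs_deriv_deriv_le zero_lt_one (hc'' n)).weaken
      (Real.toNNReal_le_toNNReal ?_)
    obtain ⟨hc00, hc01⟩ := hcb n 0 (left_mem_Icc.2 zero_le_one)
    obtain ⟨hc10, hc11⟩ := hcb n 1 (right_mem_Icc.2 zero_le_one)
    have hosc : |c n 1 - c n 0| ≤ 1 := abs_sub_le_iff.2 ⟨by linarith, by linarith⟩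
    rw [sub_zero, mul_one, div_one]
    linarith
  exact exists_subseq_tendstoUniformlyOn_of_equicontinuousOn isCompact_Icc isCompact_Icc c
    (LipschitzOnWith.uniformEquicontinuousOn c _ hLip).equicontinuousOn hcb

theorem stmt9 (φ c : ℕ → ℝ → ℝ) (ε α w : ℝ)
    (hε : 0 < ε) (hε1 : ε < 1) (hα : 0 < α) (hw : 0 < w)
    (hφc : ∀ n, ContinuousOn (φ n) (Icc 0 1))
    (hφb : ∀ n, ∀ x ∈ Icc (0:ℝ) 1, ε ≤ φ n x ∧ φ n x ≤ 1)
    (hc : ∀ n, ContDiffOn ℝ 2 (c n) (Icc 0 1))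
    (hcb : ∀ n, ∀ x ∈ Icc (0:ℝ) 1, 0 ≤ c n x ∧ c n x ≤ 1)
    (heq : ∀ n, ∀ x ∈ Ioo (0:ℝ) 1,
      -(deriv (deriv (c n)) x) + α * w ^ 2 * φ n x * c n x = 0)
    (hbc0 : ∀ n, c n 0 = 1) (hbc1 : ∀ n, deriv (c n) 1 = 0) :
    ∃ (ψ : ℕ → ℕ) (climit : ℝ → ℝ), StrictMono ψ ∧ ContinuousOn climit (Icc 0 1) ∧
      TendstoUniformlyOn (fun k => c (ψ k)) climit Filter.atTop (Icc 0 1) :=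
  stmt9_general φ c ε α w hε hα hφb hc hcb heq
end

section
/- Let Γ : [0,1] → ℝ be Lipschitz and nondecreasing with Γ(0) < 0 < Γ(1), and let c⁰_w(x) = cosh(w√(αφ₀)(1-x))/cosh(w√(αφ₀)) with α, φ₀ > 0. Define C(w) = ∫₀¹ Γ(c⁰_w(x)) dx. Then C is continuous on [0,∞), C(0) = Γ(1) > 0, C(w) < 0 for all sufficiently large w, and consequently there exists w₀ > 0 with C(w₀) = 0. -/
open Set Filter

theorem stmt18 (Γ : ℝ → ℝ) (LΓ α φ₀ : ℝ) (hα : 0 < α) (hφ₀ : 0 < φ₀)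
    (hΓL : ∀ x ∈ Icc (0:ℝ) 1, ∀ y ∈ Icc (0:ℝ) 1, |Γ y - Γ x| ≤ LΓ * |y - x|)
    (hΓmono : MonotoneOn Γ (Icc 0 1))
    (hΓ0 : Γ 0 < 0) (hΓ1 : 0 < Γ 1) :
    let c0 : ℝ → ℝ → ℝ := fun w x =>
      Real.cosh (w * Real.sqrt (α * φ₀) * (1 - x)) / Real.cosh (w * Real.sqrt (α * φ₀))
    let C : ℝ → ℝ := fun w => ∫ x in (0:ℝ)..1, Γ (c0 w x)
    ContinuousOn C (Ici 0) ∧ C 0 = Γ 1 ∧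
    (∃ W : ℝ, ∀ w ≥ W, C w < 0) ∧
    (∃ w₀ > (0:ℝ), C w₀ = 0) := by
  intro c0 C
  set k := Real.sqrt (α * φ₀) with hkdef
  have hk0 : 0 < k := Real.sqrt_pos.2 (mul_pos hα hφ₀)
  -- Lipschitz constant is positive
  have hLΓ : 0 < LΓ := by
    have h := hΓL 0 ⟨le_refl 0, zero_le_one⟩ 1 ⟨zero_le_one, le_refl 1⟩
    rw [abs_of_pos (by linarith : (0:ℝ) < Γ 1 - Γ 0)] at h
    simp at h
    linarith
  -- Continuous extension of Γ
  set Γ' : ℝ → ℝ := fun t => Γ (max 0 (min 1 t)) with hΓ'def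
  have hmem : ∀ t : ℝ, max 0 (min 1 t) ∈ Icc (0:ℝ) 1 := fun t =>
    ⟨le_max_left _ _, max_le zero_le_one (min_le_left _ _)⟩
  have hΓcont : ContinuousOn Γ (Icc 0 1) := by
    have : LipschitzOnWith (Real.toNNReal LΓ) Γ (Icc 0 1) := by
      rw [lipschitzOnWith_iff_dist_le_mul]
      intro x hx y hy
      rw [Real.dist_eq, Real.dist_eq]
      have := hΓL y hy x hx
      rwa [Real.coe_toNNReal _ hLΓ.le]
    exact this.continuousOn
  have hΓ'cont : Continuous Γ' :=
    hΓcont.comp_continuous (by fun_prop) hmem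
  have hΓ'eq : ∀ t ∈ Icc (0:ℝ) 1, Γ' t = Γ t := by
    intro t ht
    simp only [hΓ'def]
    rw [min_eq_right ht.2, max_eq_right ht.1]
  have hΓ'0 : Γ' 0 = Γ 0 := hΓ'eq 0 ⟨le_refl 0, zero_le_one⟩
  -- joint continuity
  have hjoint : Continuous (Function.uncurry fun w x => Γ' (c0 w x)) := by
    show Continuous fun p : ℝ × ℝ => Γ' (c0 p.1 p.2)
    apply hΓ'cont.comp
    exact Continuous.div (by fun_prop) (by fun_prop) (fun p => (Real.cosh_pos _).ne')
  -- c0 lands in [0,1]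
  have hc0pos : ∀ w x : ℝ, 0 < c0 w x := fun w x =>
    div_pos (Real.cosh_pos _) (Real.cosh_pos _)
  have hc0le : ∀ w : ℝ, ∀ x ∈ Icc (0:ℝ) 1, c0 w x ≤ 1 := by
    intro w x hx
    apply (div_le_one (Real.cosh_pos _)).2
    apply Real.cosh_le_cosh.2
    rw [abs_mul]
    refine mul_le_of_le_one_right (abs_nonneg _) (abs_le.2 ⟨by linarith [hx.2], by linarith [hx.1]⟩)
  -- C in terms of Γ'
  have hCeq' : ∀ w : ℝ, C w = ∫ x in (0:ℝ)..1, Γ' (c0 w x) := by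
    intro w
    apply intervalIntegral.integral_congr
    intro x hx
    rw [uIcc_of_le zero_le_one] at hx
    exact (hΓ'eq _ ⟨(hc0pos w x).le, hc0le w x hx⟩).symm
  have hCeq : ∀ w : ℝ, C w = ∫ x in Icc (0:ℝ) 1, Γ' (c0 w x) := by
    intro w
    rw [hCeq' w, intervalIntegral.integral_of_le zero_le_one,
      MeasureTheory.integral_Icc_eq_integral_Ioc]
  -- Part 1: continuity
  have hC'cont : Continuous fun w : ℝ => ∫ x in Icc (0:ℝ) 1, Γ' (c0 w x) :=
    continuous_parametric_integral_of_continuous (f := fun w x => Γ' (c0 w x)) hjoint isCompact_Icc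
  have part1 : ContinuousOn C (Ici 0) :=
    (hC'cont.continuousOn).congr fun w _ => hCeq w
  -- Part 2: C 0 = Γ 1
  have part2 : C 0 = Γ 1 := by
    simp only [C, c0]
    simp [Real.cosh_zero]
  -- bound on Γ'
  have hΓ'bound : ∀ t : ℝ, ‖Γ' t‖ ≤ |Γ 0| + LΓ := by
    intro t
    set s := max 0 (min 1 t) with hs
    have hsm := hmem t
    have h1 := hΓL 0 ⟨le_refl 0, zero_le_one⟩ s hsm
    have h2 : |Γ s| - |Γ 0| ≤ |Γ s - Γ 0| := abs_sub_abs_le_abs_sub _ _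
    have h3 : |s - 0| ≤ 1 := by
      rw [sub_zero, abs_of_nonneg hsm.1]; exact hsm.2
    have h4 : LΓ * |s - 0| ≤ LΓ * 1 := mul_le_mul_of_nonneg_left h3 hLΓ.le
    simp only [Real.norm_eq_abs]
    show |Γ s| ≤ |Γ 0| + LΓ
    linarith
  -- Part 3: Tendsto C atTop (nhds (Γ 0))
  have key : Tendsto (fun w => ∫ x in (0:ℝ)..1, Γ' (c0 w x)) atTop
      (nhds (∫ x in (0:ℝ)..1, (fun _ => Γ' 0) x)) := by
    apply intervalIntegral.tendsto_integral_filter_of_dominated_convergence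
      (fun _ => |Γ 0| + LΓ)
    · filter_upwards with w
      exact (hjoint.comp (continuous_const.prodMk continuous_id)).aestronglyMeasurable
    · filter_upwards with w
      exact MeasureTheory.ae_of_all _ fun x _ => hΓ'bound _
    · exact intervalIntegrable_const
    · apply MeasureTheory.ae_of_all
      intro x hx
      rw [uIoc_of_le zero_le_one] at hx
      have hc0tend : Tendsto (fun w => c0 w x) atTop (nhds 0) := by
        have hub : Tendsto (fun w : ℝ => 2 * Real.exp (-(k * x * w))) atTop (nhds 0) := by
          have h1 : Tendsto (fun w : ℝ => k * x * w) atTop atTop :=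
            Tendsto.const_mul_atTop (mul_pos hk0 hx.1) tendsto_id
          have h2 : Tendsto (fun w : ℝ => -(k * x * w)) atTop atBot :=
            tendsto_neg_atTop_atBot.comp h1
          have h3 := Real.tendsto_exp_atBot.comp h2
          have := h3.const_mul (2:ℝ)
          simpa using this
        apply squeeze_zero' (Filter.eventually_atTop.2 ⟨0, fun w hw => (hc0pos w x).le⟩)
          _ hub
        filter_upwards [Filter.eventually_ge_atTop (0:ℝ)] with w hw
        have ha : 0 ≤ w * k * (1 - x) :=
          mul_nonneg (mul_nonneg hw hk0.le) (by linarith [hx.2])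
        have hb : 0 ≤ w * k := mul_nonneg hw hk0.le
        have hcosh_le : Real.cosh (w * k * (1 - x)) ≤ Real.exp (w * k * (1 - x)) := by
          rw [Real.cosh_eq]
          have : Real.exp (-(w * k * (1 - x))) ≤ Real.exp (w * k * (1 - x)) :=
            Real.exp_le_exp.2 (by linarith)
          linarith
        have hcosh_ge : Real.exp (w * k) / 2 ≤ Real.cosh (w * k) := by
          rw [Real.cosh_eq]
          have : 0 < Real.exp (-(w * k)) := Real.exp_pos _
          linarith
        have hdiv : c0 w x ≤ Real.exp (w * k * (1 - x)) / (Real.exp (w * k) / 2) :=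
          div_le_div₀ (Real.exp_pos _).le hcosh_le (by positivity) hcosh_ge
        calc c0 w x ≤ Real.exp (w * k * (1 - x)) / (Real.exp (w * k) / 2) := hdiv
          _ = 2 * Real.exp (-(k * x * w)) := by
              rw [div_div_eq_mul_div, mul_comm, mul_div_assoc, ← Real.exp_sub]
              ring_nf
      exact (hΓ'cont.tendsto 0).comp hc0tend
  simp only [hΓ'0, intervalIntegral.integral_const, smul_eq_mul, sub_zero, one_mul] at key
  have keyC : Tendsto C atTop (nhds (Γ 0)) :=
    key.congr fun w => (hCeq' w).symm
  have hev : ∀ᶠ w in atTop, C w < 0 := keyC.eventually_lt_const hΓ0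
  obtain ⟨W, hW⟩ := Filter.eventually_atTop.1 hev
  refine ⟨part1, part2, ⟨W, hW⟩, ?_⟩
  -- Part 4: IVT
  set W' := max W 1 with hW'def
  have hW'pos : (0:ℝ) < W' := lt_of_lt_of_le one_pos (le_max_right _ _)
  have hCW' : C W' < 0 := hW W' (le_max_left _ _)
  have hcont : ContinuousOn C (Icc 0 W') := part1.mono (Icc_subset_Ici_self)
  have h0mem : (0:ℝ) ∈ Ioo (C W') (C 0) := ⟨hCW', by rw [part2]; exact hΓ1⟩
  obtain ⟨w₀, hw₀mem, hw₀⟩ := intermediate_value_Ioo' hW'pos.le hcont h0mem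
  exact ⟨w₀, hw₀mem.1, hw₀⟩
end
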